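/- Let u : ℝ² → ℝ be C³ near the origin. Suppose ∂₁u(0) = 0, ∂₂u(0) ≠ 0, ∂₁₁u(0) = 0, ∂₁₂u(0) = 0, ∂₁₁₁u(0) = 0 and ∂₁₂₂u(0) = 0. Define T(y) = (∂₂₂u ∂₁u − ∂₁₂u ∂₂u, ∂₁₁u ∂₂u − ∂₁₂u ∂₁u)(y). Then det Jac_T(0) = −(∂₂u(0))²·(∂₁₁₂u(0))². In particular, det Jac_T(0) ≤ 0, with equality iff ∂₁₁₂u(0) = 0. -/

import Mathlib

open Filter Topology

/-- First partial derivative in the `x₁` direction. -/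
noncomputable def d1 (u : ℝ × ℝ → ℝ) (x : ℝ × ℝ) : ℝ :=
  deriv (fun t => u (t, x.2)) x.1

/-- First partial derivative in the `x₂` direction. -/
noncomputable def d2 (u : ℝ × ℝ → ℝ) (x : ℝ × ℝ) : ℝ :=
  deriv (fun t => u (x.1, t)) x.2

section aux
variable {v f g : ℝ × ℝ → ℝ} {x : ℝ × ℝ}

private lemma hasDerivAt_line1 (x : ℝ × ℝ) :
    HasDerivAt (fun t : ℝ => ((t, x.2) : ℝ × ℝ)) (1, 0) x.1 :=
  (hasDerivAt_id x.1).prodMk (hasDerivAt_const _ _)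

private lemma hasDerivAt_line2 (x : ℝ × ℝ) :
    HasDerivAt (fun t : ℝ => ((x.1, t) : ℝ × ℝ)) (0, 1) x.2 :=
  (hasDerivAt_const _ _).prodMk (hasDerivAt_id x.2)

private lemma hasDerivAt_d1 (h : DifferentiableAt ℝ v x) :
    HasDerivAt (fun t => v (t, x.2)) (fderiv ℝ v x (1, 0)) x.1 := by
  have h' : HasFDerivAt v (fderiv ℝ v x) ((x.1, x.2) : ℝ × ℝ) := by
    simpa using h.hasFDerivAt
  exact h'.comp_hasDerivAt x.1 (hasDerivAt_line1 x)

private lemma hasDerivAt_d2 (h : DifferentiableAt ℝ v x) :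
    HasDerivAt (fun t => v (x.1, t)) (fderiv ℝ v x (0, 1)) x.2 := by
  have h' : HasFDerivAt v (fderiv ℝ v x) ((x.1, x.2) : ℝ × ℝ) := by
    simpa using h.hasFDerivAt
  exact h'.comp_hasDerivAt x.2 (hasDerivAt_line2 x)

private lemma d1_eq (h : DifferentiableAt ℝ v x) : d1 v x = fderiv ℝ v x (1, 0) :=
  (hasDerivAt_d1 h).deriv

private lemma d2_eq (h : DifferentiableAt ℝ v x) : d2 v x = fderiv ℝ v x (0, 1) :=
  (hasDerivAt_d2 h).deriv

private lemma hasDerivAt_d1' (h : DifferentiableAt ℝ v x) :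
    HasDerivAt (fun t => v (t, x.2)) (d1 v x) x.1 := by
  rw [d1_eq h]; exact hasDerivAt_d1 h

private lemma hasDerivAt_d2' (h : DifferentiableAt ℝ v x) :
    HasDerivAt (fun t => v (x.1, t)) (d2 v x) x.2 := by
  rw [d2_eq h]; exact hasDerivAt_d2 h

private lemma evDiff {n : ℕ} (hn : 1 ≤ n) (h : ContDiffAt ℝ n v x) :
    ∀ᶠ y in 𝓝 x, DifferentiableAt ℝ v y := by
  filter_upwards [h.eventually (by simp)] with y hy
  exact hy.differentiableAt (by exact_mod_cast (by omega : n ≠ 0))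

private lemma ev1 {n : ℕ} (hn : 1 ≤ n) (h : ContDiffAt ℝ n v x) :
    d1 v =ᶠ[𝓝 x] fun y => fderiv ℝ v y (1, 0) := by
  filter_upwards [evDiff hn h] with y hy using d1_eq hy

private lemma ev2 {n : ℕ} (hn : 1 ≤ n) (h : ContDiffAt ℝ n v x) :
    d2 v =ᶠ[𝓝 x] fun y => fderiv ℝ v y (0, 1) := by
  filter_upwards [evDiff hn h] with y hy using d2_eq hy

private lemma contDiffAt_fderiv_apply {n : ℕ} (w : ℝ × ℝ) (h : ContDiffAt ℝ (n + 1) v x) :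
    ContDiffAt ℝ n (fun y => fderiv ℝ v y w) x :=
  (h.fderiv_right (by exact_mod_cast le_rfl)).clm_apply contDiffAt_const

private lemma contDiffAt_d1 {n : ℕ} (h : ContDiffAt ℝ (n + 1) v x) :
    ContDiffAt ℝ n (d1 v) x :=
  (contDiffAt_fderiv_apply (1, 0) h).congr_of_eventuallyEq
    (ev1 (Nat.le_add_left 1 n) (by exact_mod_cast h))

private lemma contDiffAt_d2 {n : ℕ} (h : ContDiffAt ℝ (n + 1) v x) :
    ContDiffAt ℝ n (d2 v) x :=
  (contDiffAt_fderiv_apply (0, 1) h).congr_of_eventuallyEq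
    (ev2 (Nat.le_add_left 1 n) (by exact_mod_cast h))

private lemma d1_congr (hfg : f =ᶠ[𝓝 x] g) : d1 f x = d1 g x := by
  apply Filter.EventuallyEq.deriv_eq
  have ht : Tendsto (fun t : ℝ => ((t, x.2) : ℝ × ℝ)) (𝓝 x.1) (𝓝 x) := by
    simpa using (hasDerivAt_line1 x).continuousAt.tendsto
  exact hfg.comp_tendsto ht

private lemma d2_congr (hfg : f =ᶠ[𝓝 x] g) : d2 f x = d2 g x := by
  apply Filter.EventuallyEq.deriv_eq
  have ht : Tendsto (fun t : ℝ => ((x.1, t) : ℝ × ℝ)) (𝓝 x.2) (𝓝 x) := by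
    simpa using (hasDerivAt_line2 x).continuousAt.tendsto
  exact hfg.comp_tendsto ht

private lemma d1_fderiv_apply (w : ℝ × ℝ) (h : ContDiffAt ℝ 2 v x) :
    d1 (fun y => fderiv ℝ v y w) x = fderiv ℝ (fderiv ℝ v) x (1, 0) w := by
  have hc : DifferentiableAt ℝ (fderiv ℝ v) x :=
    (h.fderiv_right (m := 1) (by norm_num)).differentiableAt one_ne_zero
  have hg : DifferentiableAt ℝ (fun y => fderiv ℝ v y w) x :=
    hc.clm_apply (differentiableAt_const w)
  rw [d1_eq hg, fderiv_clm_apply hc (differentiableAt_const w)]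
  simp

private lemma d2_fderiv_apply (w : ℝ × ℝ) (h : ContDiffAt ℝ 2 v x) :
    d2 (fun y => fderiv ℝ v y w) x = fderiv ℝ (fderiv ℝ v) x (0, 1) w := by
  have hc : DifferentiableAt ℝ (fderiv ℝ v) x :=
    (h.fderiv_right (m := 1) (by norm_num)).differentiableAt one_ne_zero
  have hg : DifferentiableAt ℝ (fun y => fderiv ℝ v y w) x :=
    hc.clm_apply (differentiableAt_const w)
  rw [d2_eq hg, fderiv_clm_apply hc (differentiableAt_const w)]
  simp

/-- Schwarz symmetry of mixed second partial derivatives for a `C²` function. -/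
private lemma d1_d2_symm (h : ContDiffAt ℝ 2 v x) : d1 (d2 v) x = d2 (d1 v) x := by
  rw [d1_congr (ev2 (n := 2) one_le_two (by exact_mod_cast h)),
      d2_congr (ev1 (n := 2) one_le_two (by exact_mod_cast h)),
      d1_fderiv_apply _ h, d2_fderiv_apply _ h]
  have hc : HasFDerivAt (fderiv ℝ v) (fderiv ℝ (fderiv ℝ v) x) x :=
    ((h.fderiv_right (m := 1) (by norm_num)).differentiableAt one_ne_zero).hasFDerivAt
  have hev : ∀ᶠ y in 𝓝 x, HasFDerivAt v (fderiv ℝ v y) y := by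
    filter_upwards [evDiff (n := 2) one_le_two (by exact_mod_cast h)] with y hy
    exact hy.hasFDerivAt
  exact second_derivative_symmetric_of_eventually hev hc (1, 0) (0, 1)

private lemma d1_mul_sub (a b c e : ℝ × ℝ → ℝ) (x : ℝ × ℝ)
    (ha : DifferentiableAt ℝ a x) (hb : DifferentiableAt ℝ b x)
    (hc : DifferentiableAt ℝ c x) (he : DifferentiableAt ℝ e x) :
    d1 (fun y => a y * b y - c y * e y) x =
      d1 a x * b x + a x * d1 b x - (d1 c x * e x + c x * d1 e x) := by
  have H : HasDerivAt (fun t => a (t, x.2) * b (t, x.2) - c (t, x.2) * e (t, x.2))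
      (d1 a x * b (x.1, x.2) + a (x.1, x.2) * d1 b x -
        (d1 c x * e (x.1, x.2) + c (x.1, x.2) * d1 e x)) x.1 :=
    ((hasDerivAt_d1' ha).mul (hasDerivAt_d1' hb)).sub
      ((hasDerivAt_d1' hc).mul (hasDerivAt_d1' he))
  simpa [d1] using H.deriv

private lemma d2_mul_sub (a b c e : ℝ × ℝ → ℝ) (x : ℝ × ℝ)
    (ha : DifferentiableAt ℝ a x) (hb : DifferentiableAt ℝ b x)
    (hc : DifferentiableAt ℝ c x) (he : DifferentiableAt ℝ e x) :
    d2 (fun y => a y * b y - c y * e y) x =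
      d2 a x * b x + a x * d2 b x - (d2 c x * e x + c x * d2 e x) := by
  have H : HasDerivAt (fun t => a (x.1, t) * b (x.1, t) - c (x.1, t) * e (x.1, t))
      (d2 a x * b (x.1, x.2) + a (x.1, x.2) * d2 b x -
        (d2 c x * e (x.1, x.2) + c (x.1, x.2) * d2 e x)) x.2 :=
    ((hasDerivAt_d2' ha).mul (hasDerivAt_d2' hb)).sub
      ((hasDerivAt_d2' hc).mul (hasDerivAt_d2' he))
  simpa [d2] using H.deriv

end aux

/-- Jacobian determinant of `T` at a fully degenerate boundary-type point. -/
theorem jacobian_T_degenerate (u : ℝ × ℝ → ℝ)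
    (hu : ContDiffAt ℝ 3 u 0)
    (h1 : d1 u 0 = 0) (h2 : d2 u 0 ≠ 0)
    (h11 : d1 (d1 u) 0 = 0) (h12 : d2 (d1 u) 0 = 0)
    (h111 : d1 (d1 (d1 u)) 0 = 0) (h122 : d2 (d2 (d1 u)) 0 = 0)
    (T1 T2 : ℝ × ℝ → ℝ)
    (hT1 : T1 = fun y => d2 (d2 u) y * d1 u y - d2 (d1 u) y * d2 u y)
    (hT2 : T2 = fun y => d1 (d1 u) y * d2 u y - d2 (d1 u) y * d1 u y) :
    d1 T1 0 * d2 T2 0 - d2 T1 0 * d1 T2 0 =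
      -(d2 u 0) ^ 2 * (d2 (d1 (d1 u)) 0) ^ 2 ∧
    d1 T1 0 * d2 T2 0 - d2 T1 0 * d1 T2 0 ≤ 0 ∧
    (d1 T1 0 * d2 T2 0 - d2 T1 0 * d1 T2 0 = 0 ↔ d2 (d1 (d1 u)) 0 = 0) := by
  have hu3 : ContDiffAt ℝ ((2 : ℕ) + 1) u 0 := by exact_mod_cast hu
  have hd1u : ContDiffAt ℝ (2 : ℕ) (d1 u) 0 := contDiffAt_d1 hu3
  have hd2u : ContDiffAt ℝ (2 : ℕ) (d2 u) 0 := contDiffAt_d2 hu3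
  have hd1u' : ContDiffAt ℝ ((1 : ℕ) + 1) (d1 u) 0 := by exact_mod_cast hd1u
  have hd2u' : ContDiffAt ℝ ((1 : ℕ) + 1) (d2 u) 0 := by exact_mod_cast hd2u
  have hd11 : ContDiffAt ℝ (1 : ℕ) (d1 (d1 u)) 0 := contDiffAt_d1 hd1u'
  have hd21 : ContDiffAt ℝ (1 : ℕ) (d2 (d1 u)) 0 := contDiffAt_d2 hd1u'
  have hd22 : ContDiffAt ℝ (1 : ℕ) (d2 (d2 u)) 0 := contDiffAt_d2 hd2u'
  have hd12 : ContDiffAt ℝ (1 : ℕ) (d1 (d2 u)) 0 := contDiffAt_d1 hd2u'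
  -- differentiability at 0
  have D1u : DifferentiableAt ℝ (d1 u) 0 := hd1u.differentiableAt (by norm_num)
  have D2u : DifferentiableAt ℝ (d2 u) 0 := hd2u.differentiableAt (by norm_num)
  have D11 : DifferentiableAt ℝ (d1 (d1 u)) 0 := hd11.differentiableAt (by norm_num)
  have D21 : DifferentiableAt ℝ (d2 (d1 u)) 0 := hd21.differentiableAt (by norm_num)
  have D22 : DifferentiableAt ℝ (d2 (d2 u)) 0 := hd22.differentiableAt (by norm_num)
  -- Schwarz for third-order mixed partial
  have hsym : d1 (d2 (d1 u)) 0 = d2 (d1 (d1 u)) 0 :=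
    d1_d2_symm (by exact_mod_cast hd1u)
  set K := d2 (d1 (d1 u)) 0 with hK
  set e0 := d2 u 0 with he0
  -- the four entries of the Jacobian
  have E11 : d1 T1 0 = -(K * e0) := by
    rw [hT1, d1_mul_sub _ _ _ _ _ D22 D1u D21 D2u, h1, h11, h12, hsym]; ring
  have E12 : d2 T1 0 = 0 := by
    rw [hT1, d2_mul_sub _ _ _ _ _ D22 D1u D21 D2u, h1, h12, h122]; ring
  have E21 : d1 T2 0 = 0 := by
    rw [hT2, d1_mul_sub _ _ _ _ _ D11 D2u D21 D1u, h1, h11, h12, h111]; ring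
  have E22 : d2 T2 0 = K * e0 := by
    rw [hT2, d2_mul_sub _ _ _ _ _ D11 D2u D21 D1u, h1, h11, h12]; ring
  have Edet : d1 T1 0 * d2 T2 0 - d2 T1 0 * d1 T2 0 = -e0 ^ 2 * K ^ 2 := by
    rw [E11, E12, E21, E22]; ring
  refine ⟨Edet, ?_, ?_⟩
  · rw [Edet]
    nlinarith [sq_nonneg e0, sq_nonneg K, sq_nonneg (e0 * K)]
  · rw [Edet]
    constructor
    · intro h0
      have he2 : e0 ^ 2 ≠ 0 := pow_ne_zero 2 h2
      have : e0 ^ 2 * K ^ 2 = 0 := by linarith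
      have hK2 : K ^ 2 = 0 := by
        rcases mul_eq_zero.mp this with h | h
        · exact absurd h he2
        · exact h
      exact pow_eq_zero_iff (by norm_num) |>.mp hK2
    · intro h0
      rw [h0]; ring
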